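/- Let X be a finite poset equipped with an order-preserving map π to the Boolean lattice {0,1}^n, such that every covering relation in X maps to a covering relation in {0,1}^n, and such that for every x ≺ y in X with |π(y)| = |π(x)| + 2, the open interval (x,y) in X has exactly 2 or exactly 4 elements, with equal numbers lying over each of the two intermediate cube vertices. If X has a unique minimum m and unique maximum M with π(m) = 0̄, π(M) = 1̄, then π restricted to any level is surjective onto the corresponding level of the cube. -/
import Mathlib

/-- The Manhattan norm on `{0,1}^n`. -/
def cubeNorm {n : ℕ} (u : Fin n → Bool) : ℕ :=
  (Finset.univ.filter fun i => u i = true).card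

/-- Covering relation in the cube: one coordinate is changed from 0 to 1. -/
def CubeCover {n : ℕ} (u v : Fin n → Bool) : Prop :=
  ∃ k, u k = false ∧ v = Function.update u k true

lemma cubeNorm_update_true {n : ℕ} (u : Fin n → Bool) (k : Fin n) (h : u k = false) :
    cubeNorm (Function.update u k true) = cubeNorm u + 1 := by
  unfold cubeNorm
  have : (Finset.univ.filter fun i => Function.update u k true i = true)
      = insert k (Finset.univ.filter fun i => u i = true) := by
    ext i
    rcases eq_or_ne i k with rfl | hik
    · simp
    · simp [Function.update_of_ne hik, hik]
  rw [this, Finset.card_insert_of_notMem (by simp [h])]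

lemma cubeNorm_lt {n : ℕ} (u : Fin n → Bool) (i : Fin n) (h : u i = false) :
    cubeNorm u < n := by
  have : (Finset.univ.filter fun j => u j = true) ⊂ Finset.univ := by
    refine (Finset.filter_subset _ _).ssubset_of_ne ?_
    intro he
    have : i ∈ Finset.univ.filter fun j => u j = true := he.symm ▸ Finset.mem_univ i
    simp [h] at this
  simpa [cubeNorm] using Finset.card_lt_card this

/-- Let `X` be a finite poset with an order-preserving map `π` to the Boolean lattice
`{0,1}^n` mapping covering relations to covering relations, such that every height-2
interval of `X` has exactly 2 or exactly 4 intermediate elements, equally distributed over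
the two intermediate cube vertices.  If `X` has a unique minimum `m` and unique maximum `M`
with `π(m) = 0̄` and `π(M) = 1̄`, then `π` restricted to any level is surjective onto the
corresponding level of the cube. -/
theorem pi_level_surjective {n : ℕ} {X : Type*} [PartialOrder X] [Fintype X]
    (π : X → (Fin n → Bool)) (hmono : Monotone π)
    (m M : X) (hm : ∀ p, m ≤ p) (hM : ∀ p, p ≤ M)
    (hπm : π m = fun _ => false) (hπM : π M = fun _ => true)
    (hcov : ∀ p q : X, p ⋖ q → CubeCover (π p) (π q))
    (hint : ∀ p q : X, p < q → cubeNorm (π q) = cubeNorm (π p) + 2 →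
      (({r | p < r ∧ r < q} : Set X).ncard = 2 ∨ ({r | p < r ∧ r < q} : Set X).ncard = 4) ∧
      ∀ v : Fin n → Bool, CubeCover (π p) v → CubeCover v (π q) →
        2 * ({r | p < r ∧ r < q ∧ π r = v} : Set X).ncard
          = ({r | p < r ∧ r < q} : Set X).ncard) :
    ∀ (k : ℕ) (v : Fin n → Bool), cubeNorm v = k → ∃ p : X, π p = v ∧ cubeNorm (π p) = k := by
  -- Claim: one can always add any missing coordinate.
  have claimA : ∀ c : ℕ, ∀ p : X, ∀ i : Fin n, n - cubeNorm (π p) ≤ c → π p i = false →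
      ∃ q : X, p < q ∧ π q = Function.update (π p) i true := by
    intro c
    induction c with
    | zero =>
      intro p i hc hi
      have := cubeNorm_lt (π p) i hi
      omega
    | succ c ih =>
      intro p i hc hi
      have hpM : p < M := lt_of_le_of_ne (hM p) (by
        intro h; rw [h, hπM] at hi; simp at hi)
      obtain ⟨q', hq'⟩ := exists_covBy_of_wellFoundedLT hpM.not_isMax
      obtain ⟨j, hj, hq'eq⟩ := hcov p q' hq'
      have hnq' : cubeNorm (π q') = cubeNorm (π p) + 1 := by
        rw [hq'eq, cubeNorm_update_true _ _ hj]
      rcases eq_or_ne j i with rfl | hji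
      · exact ⟨q', hq'.lt, hq'eq⟩
      · have hqi : π q' i = false := by
          rw [hq'eq, Function.update_of_ne (Ne.symm hji)]; exact hi
        obtain ⟨r, hq'r, hreq⟩ := ih q' i (by omega) hqi
        have hpr : p < r := hq'.lt.trans hq'r
        have hnr : cubeNorm (π r) = cubeNorm (π p) + 2 := by
          rw [hreq, cubeNorm_update_true _ _ hqi]; omega
        have cc1 : CubeCover (π p) (Function.update (π p) i true) := ⟨i, hi, rfl⟩
        have cc2 : CubeCover (Function.update (π p) i true) (π r) := by
          refine ⟨j, ?_, ?_⟩
          · rw [Function.update_of_ne hji]; exact hj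
          · rw [hreq, hq'eq, Function.update_comm hji]
        obtain ⟨htot, hdist⟩ := hint p r hpr hnr
        have h2 := hdist _ cc1 cc2
        have hne : ({r' | p < r' ∧ r' < r ∧ π r' = Function.update (π p) i true} : Set X).ncard ≠ 0 := by
          rcases htot with h1 | h1 <;> omega
        obtain ⟨s, hs1, hs2, hs3⟩ := Set.nonempty_of_ncard_ne_zero hne
        exact ⟨s, hs1, hs3⟩
  intro k
  induction k with
  | zero =>
    intro v hv
    have hvf : v = fun _ => false := by
      funext i
      have he : (Finset.univ.filter fun i => v i = true) = ∅ := Finset.card_eq_zero.mp hv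
      have : i ∉ (Finset.univ.filter fun i => v i = true) := he ▸ Finset.notMem_empty i
      simpa using this
    exact ⟨m, by rw [hπm, hvf], by rw [hπm]; simp [cubeNorm]⟩
  | succ k ih =>
    intro v hv
    have : ∃ i, v i = true := by
      have : (Finset.univ.filter fun i => v i = true).Nonempty :=
        Finset.card_pos.mp (by show 0 < cubeNorm v; omega)
      obtain ⟨i, hi⟩ := this
      exact ⟨i, by simpa using hi⟩
    obtain ⟨i, hi⟩ := this
    set u := Function.update v i false with hu
    have hui : u i = false := by simp [hu]
    have huv : Function.update u i true = v := by
      funext j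
      rcases eq_or_ne j i with rfl | h
      · simp [hi]
      · simp [hu, Function.update_of_ne h]
    have hun : cubeNorm u = k := by
      have := cubeNorm_update_true u i hui
      rw [huv, hv] at this; omega
    obtain ⟨p, hp, _⟩ := ih u hun
    obtain ⟨q, _, hq⟩ := claimA (n - cubeNorm (π p)) p i le_rfl (by rw [hp]; exact hui)
    exact ⟨q, by rw [hq, hp, huv], by rw [hq, hp, huv, hv]⟩
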